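/- arXiv:0812.0733 — 4 statements merged into one kernel-verified Lean document; each statement's English description precedes it below -/
import Mathlib

section
/- The number of parking functions of length n is (n+1)^(n-1). -/
/-- `f` is a parking function of length `n`: some rearrangement of it is
weakly increasing with `i`-th entry between `1` and `i` (1-indexed). -/
def IsParkingFunction (n : ℕ) (f : Fin n → ℕ) : Prop :=
  ∃ σ : Equiv.Perm (Fin n), Monotone (f ∘ σ) ∧ ∀ i : Fin n, 1 ≤ f (σ i) ∧ f (σ i) ≤ i.1 + 1

open Finset

namespace PFaux

def wD (n : ℕ) (g : Fin n → ZMod (n+1)) (c : ZMod (n+1)) : Prop :=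
  ∀ s ≤ n, (Finset.univ.filter (fun i => ((c - g i).val ≤ s))).card ≤ s

lemma mod_helper (m a : ℕ) (hm : 0 < m) (ha : a < 2*m) :
    a % m = if a < m then a else a - m := by
  split_ifs with h
  · exact Nat.mod_eq_of_lt h
  · rw [Nat.mod_eq_sub_mod (le_of_not_gt h), Nat.mod_eq_of_lt (by omega)]

lemma val_sub_nat {m : ℕ} [NeZero m] (x : ZMod m) (t : ℕ) (ht : t < m) :
    (x - (t : ZMod m)).val = if t ≤ x.val then x.val - t else x.val + m - t := by
  have hx : x.val < m := ZMod.val_lt _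
  have htv : ((t : ZMod m)).val = t := ZMod.val_cast_of_lt ht
  by_cases h0 : (t : ZMod m) = 0
  · have ht0 : t = 0 := by rw [h0] at htv; simpa using htv.symm
    subst ht0
    simp
  · have hneg : (-(t : ZMod m)).val = m - t := by rw [ZMod.neg_val, if_neg h0, htv]
    have : x - (t : ZMod m) = x + (-(t : ZMod m)) := by ring
    rw [this, ZMod.val_add, hneg, mod_helper m _ (by omega) (by omega)]
    have ht1 : 1 ≤ t := Nat.pos_of_ne_zero (by rintro rfl; simp at h0)
    split_ifs <;> omega

lemma wD_unique {n : ℕ} (g : Fin n → ZMod (n+1)) (c c' : ZMod (n+1))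
    (h : wD n g c) (h' : wD n g c') : c = c' := by
  by_contra hne
  have hsub : c' - c ≠ 0 := sub_ne_zero.mpr (Ne.symm hne)
  set d := (c' - c).val with hd
  have hdlt : d < n + 1 := ZMod.val_lt _
  have hd1 : 1 ≤ d := Nat.pos_of_ne_zero (fun h0 => hsub ((ZMod.val_eq_zero _).mp h0))
  have key : ∀ x : ZMod (n+1), ((c' - x).val ≤ d - 1) ↔ ¬ ((c - x).val ≤ n - d) := by
    intro x
    have hb : (c - x).val < n + 1 := ZMod.val_lt _
    have heq : c' - x = (c - x) + (c' - c) := by ring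
    have hv : (c' - x).val = ((c - x).val + d) % (n+1) := by
      rw [heq, ZMod.val_add]
    rw [hv, mod_helper (n+1) _ (by omega) (by omega)]
    split_ifs with hlt <;> omega
  have h1 := h' (d - 1) (by omega)
  have h2 := h (n - d) (by omega)
  have hcomp : (Finset.univ.filter (fun i : Fin n => ¬ ((c' - g i).val ≤ d - 1))) =
      (Finset.univ.filter (fun i => (c - g i).val ≤ n - d)) := by
    apply Finset.filter_congr
    intro i _
    simp only [eq_iff_iff, key (g i)]
    tauto
  have htot := Finset.card_filter_add_card_filter_not
    (s := (Finset.univ : Finset (Fin n))) (p := fun i => (c' - g i).val ≤ d - 1)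
  rw [hcomp] at htot
  simp only [Finset.card_univ, Fintype.card_fin] at htot
  omega

def Wd (n : ℕ) (g : Fin n → ZMod (n+1)) (i : Fin n) : ℕ := (-(g i)).val

def Nc (n : ℕ) (g : Fin n → ZMod (n+1)) (t : ℕ) : ℕ :=
  (Finset.univ.filter (fun i => Wd n g i < t)).card

lemma wD_exists {n : ℕ} (g : Fin n → ZMod (n+1)) : ∃ c, wD n g c := by
  set W : Fin n → ℕ := Wd n g with hW
  set N : ℕ → ℕ := Nc n g with hN
  have hNdef : ∀ t, N t = (Finset.univ.filter (fun i => W i < t)).card := fun t => rfl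
  have hWlt : ∀ i, W i < n + 1 := fun i => ZMod.val_lt _
  have hN0 : N 0 = 0 := by simp [hNdef]
  have hNm : N (n+1) = n := by
    rw [hNdef]
    rw [Finset.filter_true_of_mem (fun i _ => hWlt i)]
    simp
  have hNle : ∀ t, N t ≤ n := by
    intro t
    calc N t ≤ Finset.univ.card := Finset.card_filter_le _ _
    _ = n := by simp
  -- choose last argmax of t ↦ N t - t on [0, n]
  obtain ⟨t₀, ht₀mem, ht₀max⟩ := Finset.exists_max_image (Finset.range (n+1))
    (fun t => (N t : ℤ) - t) ⟨0, by simp⟩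
  have ht₀le : t₀ ≤ n := by
    have := Finset.mem_range.mp ht₀mem
    omega
  have ht₀P : ∀ u ≤ n, N u + t₀ ≤ N t₀ + u := by
    intro u hu
    have := ht₀max u (Finset.mem_range.mpr (by omega))
    omega
  set Q : ℕ → Prop := fun t => ∀ u ≤ n, N u + t ≤ N t + u with hQ
  have hQdec : DecidablePred Q := fun t => Nat.decidableBallLE n _
  set t' := @Nat.findGreatest Q hQdec n with ht'
  have ht'le : t' ≤ n := @Nat.findGreatest_le Q hQdec n
  have hmax : ∀ u ≤ n, N u + t' ≤ N t' + u :=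
    @Nat.findGreatest_spec t₀ Q hQdec n ht₀le ht₀P
  have hstrict : ∀ u ≤ n, t' < u → N u + t' + 1 ≤ N t' + u := by
    intro u hu hlt
    rcases lt_or_eq_of_le (hmax u hu) with h | h
    · exact h
    · exfalso
      have hQu : Q u := by
        intro v hv
        have := hmax v hv
        omega
      exact @Nat.findGreatest_is_greatest u Q hQdec n hlt hu hQu
  have hP0 : t' ≤ N t' := by
    have := hmax 0 (by omega)
    omega
  refine ⟨-(t' : ZMod (n+1)), ?_⟩
  intro s hs
  have hval : ∀ i, ((-(t' : ZMod (n+1)) - g i).val) =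
      if t' ≤ W i then W i - t' else W i + (n+1) - t' := by
    intro i
    have h1 : -(t' : ZMod (n+1)) - g i = (-(g i)) - (t' : ZMod (n+1)) := by ring
    rw [h1, val_sub_nat _ t' (by omega)]
    rfl
  by_cases hcase : t' + s + 1 ≤ n + 1
  · set u := t' + s + 1 with hu
    have hpred : (Finset.univ.filter (fun i => (-(t' : ZMod (n+1)) - g i).val ≤ s)) =
        (Finset.univ.filter (fun i => t' ≤ W i ∧ W i < u)) := by
      apply Finset.filter_congr
      intro i _
      rw [hval i]
      have := hWlt i
      split_ifs with h <;> simp <;> omega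
    have hsplit : N t' + (Finset.univ.filter (fun i => t' ≤ W i ∧ W i < u)).card = N u := by
      rw [hNdef, hNdef]
      rw [← Finset.card_union_of_disjoint]
      · congr 1
        ext i
        simp only [Finset.mem_union, Finset.mem_filter, Finset.mem_univ, true_and]
        omega
      · rw [Finset.disjoint_left]
        intro i hi hi2
        simp only [Finset.mem_filter] at hi hi2
        omega
    have hPu : N u + t' + 1 ≤ N t' + u := by
      rcases Nat.lt_or_ge u (n+1) with h | h
      · exact hstrict u (by omega) (by omega)
      · have hun : u = n + 1 := by omega
        rw [hun, hNm]
        omega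
    rw [hpred]
    omega
  · set u' := t' + s + 1 - (n+1) with hu'
    have hu'1 : 1 ≤ u' := by omega
    have hu'le : u' ≤ t' := by omega
    have hpred : (Finset.univ.filter (fun i => (-(t' : ZMod (n+1)) - g i).val ≤ s)) =
        (Finset.univ.filter (fun i => t' ≤ W i ∨ W i < u')) := by
      apply Finset.filter_congr
      intro i _
      rw [hval i]
      have := hWlt i
      split_ifs with h <;> simp <;> omega
    have hsplit : (Finset.univ.filter (fun i => t' ≤ W i ∨ W i < u')).card =
        (Finset.univ.filter (fun i => t' ≤ W i)).card + N u' := by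
      rw [hNdef]
      rw [← Finset.card_union_of_disjoint]
      · congr 1
        ext i
        simp only [Finset.mem_union, Finset.mem_filter, Finset.mem_univ, true_and]
      · rw [Finset.disjoint_left]
        intro i hi hi2
        simp only [Finset.mem_filter] at hi hi2
        omega
    have hcompl : (Finset.univ.filter (fun i => t' ≤ W i)).card + N t' = n := by
      rw [hNdef]
      have := Finset.card_filter_add_card_filter_not
        (s := (Finset.univ : Finset (Fin n))) (p := fun i => t' ≤ W i)
      simp only [Finset.card_univ, Fintype.card_fin, not_le] at this
      convert this using 2
    have hPu : N u' + t' ≤ N t' + u' := hmax u' (by omega)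
    rw [hpred, hsplit]
    omega

def PF' (n : ℕ) (f : Fin n → ℕ) : Prop :=
  (∀ i, 1 ≤ f i ∧ f i ≤ n) ∧
    ∀ t ≤ n, t ≤ (Finset.univ.filter (fun i => f i ≤ t)).card

lemma card_val_lt {n t : ℕ} (ht : t ≤ n) :
    (Finset.univ.filter (fun j : Fin n => (j : ℕ) < t)).card = t := by
  have himg : (Finset.univ.filter (fun j : Fin n => (j : ℕ) < t)).image (Fin.val) =
      Finset.range t := by
    ext a
    simp only [Finset.mem_image, Finset.mem_filter, Finset.mem_univ, true_and,
      Finset.mem_range]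
    constructor
    · rintro ⟨j, hj, rfl⟩; exact hj
    · intro ha
      exact ⟨⟨a, by omega⟩, ha, rfl⟩
  have := Finset.card_image_of_injective
    (Finset.univ.filter (fun j : Fin n => (j : ℕ) < t)) (Fin.val_injective)
  rw [himg, Finset.card_range] at this
  omega

lemma isPF_iff_PF' {n : ℕ} (f : Fin n → ℕ) :
    IsParkingFunction n f ↔ PF' n f := by
  constructor
  · rintro ⟨σ, hmono, hbd⟩
    constructor
    · intro i
      have h1 := hbd (σ.symm i)
      simp only [Equiv.apply_symm_apply] at h1
      have h2 : ((σ.symm i : Fin n) : ℕ) + 1 ≤ n := (σ.symm i).2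
      exact ⟨h1.1, by omega⟩
    · intro t htn
      have hsub : (Finset.univ.filter (fun j : Fin n => (j : ℕ) < t)).image σ ⊆
          Finset.univ.filter (fun i => f i ≤ t) := by
        intro k hk
        simp only [Finset.mem_image, Finset.mem_filter, Finset.mem_univ, true_and] at hk ⊢
        obtain ⟨j, hj, rfl⟩ := hk
        have := (hbd j).2
        omega
      calc t = (Finset.univ.filter (fun j : Fin n => (j : ℕ) < t)).card := (card_val_lt htn).symm
      _ = ((Finset.univ.filter (fun j : Fin n => (j : ℕ) < t)).image σ).card :=
          (Finset.card_image_of_injective _ σ.injective).symm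
      _ ≤ _ := Finset.card_le_card hsub
  · rintro ⟨h1, h2⟩
    have hmono := Tuple.monotone_sort f
    refine ⟨Tuple.sort f, hmono, fun i => ⟨(h1 _).1, ?_⟩⟩
    by_contra hcon
    push_neg at hcon
    set t := (i : ℕ) + 1 with htdef
    have htn : t ≤ n := i.2
    have hsub : Finset.univ.filter (fun k => f k ≤ t) ⊆
        (Finset.univ.filter (fun j : Fin n => (j : ℕ) < (i : ℕ))).image (Tuple.sort f) := by
      intro k hk
      simp only [Finset.mem_filter, Finset.mem_univ, true_and, Finset.mem_image] at hk ⊢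
      refine ⟨(Tuple.sort f).symm k, ?_, by simp⟩
      by_contra hge
      push_neg at hge
      have hle : i ≤ (Tuple.sort f).symm k := Fin.le_def.mpr (by omega)
      have hmo := hmono hle
      simp only [Function.comp_apply, Equiv.apply_symm_apply] at hmo
      omega
    have hc1 := h2 t htn
    have hc2 : (Finset.univ.filter (fun k => f k ≤ t)).card ≤ (i : ℕ) := by
      calc (Finset.univ.filter (fun k => f k ≤ t)).card
          ≤ ((Finset.univ.filter (fun j : Fin n => (j : ℕ) < (i : ℕ))).image (Tuple.sort f)).card :=
            Finset.card_le_card hsub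
      _ = (Finset.univ.filter (fun j : Fin n => (j : ℕ) < (i : ℕ))).card :=
            Finset.card_image_of_injective _ (Tuple.sort f).injective
      _ = (i : ℕ) := card_val_lt (by omega)
    omega

lemma PF'_iff_wD {n : ℕ} (g : Fin n → ZMod (n+1)) :
    PF' n (fun i => (g i).val) ↔ wD n g 0 := by
  have hvlt : ∀ i, (g i).val < n + 1 := fun i => ZMod.val_lt _
  have hneg : ∀ i, g i ≠ 0 → ((0 : ZMod (n+1)) - g i).val = n + 1 - (g i).val := by
    intro i hi
    rw [zero_sub, ZMod.neg_val, if_neg hi]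
  constructor
  · rintro ⟨h1, h2⟩ s hs
    beta_reduce at h1 h2
    have hne : ∀ i, g i ≠ 0 := by
      intro i hi
      have := (h1 i).1
      simp only [hi, ZMod.val_zero] at this
      omega
    have hpred : (Finset.univ.filter (fun i => ((0 : ZMod (n+1)) - g i).val ≤ s)) =
        (Finset.univ.filter (fun i => ¬ ((g i).val ≤ n - s))) := by
      apply Finset.filter_congr
      intro i _
      rw [hneg i (hne i)]
      have := (h1 i).1
      have := (h1 i).2
      simp only [eq_iff_iff, not_le]
      omega
    rw [hpred]
    have hcompl := Finset.card_filter_add_card_filter_not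
      (s := (Finset.univ : Finset (Fin n))) (p := fun i => (g i).val ≤ n - s)
    simp only [Finset.card_univ, Fintype.card_fin] at hcompl
    have := h2 (n - s) (by omega)
    omega
  · intro hw
    have hne : ∀ i, g i ≠ 0 := by
      intro i hi
      have h0 := hw 0 (by omega)
      have hmem : i ∈ Finset.univ.filter (fun i => ((0 : ZMod (n+1)) - g i).val ≤ 0) := by
        simp [hi]
      have := Finset.card_pos.mpr ⟨i, hmem⟩
      omega
    have hval1 : ∀ i, 1 ≤ (g i).val := by
      intro i
      have := hne i
      rcases Nat.eq_zero_or_pos (g i).val with h | h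
      · exact absurd ((ZMod.val_eq_zero _).mp h) this
      · exact h
    constructor
    · intro i
      beta_reduce
      exact ⟨hval1 i, by have := hvlt i; omega⟩
    intro t htn
    beta_reduce
    have hs := hw (n - t) (by omega)
    have hpred : (Finset.univ.filter (fun i => ((0 : ZMod (n+1)) - g i).val ≤ n - t)) =
        (Finset.univ.filter (fun i => ¬ ((g i).val ≤ t))) := by
      apply Finset.filter_congr
      intro i _
      rw [hneg i (hne i)]
      have := hval1 i
      have := hvlt i
      simp only [eq_iff_iff, not_le]
      omega
    rw [hpred] at hs
    have hcompl := Finset.card_filter_add_card_filter_not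
      (s := (Finset.univ : Finset (Fin n))) (p := fun i => (g i).val ≤ t)
    simp only [Finset.card_univ, Fintype.card_fin] at hcompl
    omega

lemma wD_shift {n : ℕ} (g : Fin n → ZMod (n+1)) (c a : ZMod (n+1)) :
    wD n (fun i => g i + a) (c + a) ↔ wD n g c := by
  unfold wD
  have h : ∀ i, (c + a) - (g i + a) = c - g i := fun i => by ring
  simp only [h]

lemma main_count {n : ℕ} (hn : 1 ≤ n) :
    {g : Fin n → ZMod (n+1) | wD n g 0}.ncard = (n+1)^(n-1) := by
  classical
  have hEU : ∀ g : Fin n → ZMod (n+1), ∃! c, wD n g c := by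
    intro g
    obtain ⟨c, hc⟩ := wD_exists g
    exact ⟨c, hc, fun c' hc' => wD_unique g c' c hc' hc⟩
  set E : (Fin n → ZMod (n+1)) → ZMod (n+1) := fun g => (hEU g).choose with hE
  have hEspec : ∀ g, wD n g (E g) := fun g => (hEU g).choose_spec.1
  have hEiff : ∀ g c, E g = c ↔ wD n g c := by
    intro g c
    constructor
    · rintro rfl; exact hEspec g
    · intro h; exact ((hEU g).choose_spec.2 c h).symm
  have hfib : ∀ c : ZMod (n+1),
      (Finset.univ.filter (fun g : Fin n → ZMod (n+1) => E g = c)).card =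
      (Finset.univ.filter (fun g : Fin n → ZMod (n+1) => E g = 0)).card := by
    intro c
    apply Finset.card_bij' (i := fun g _ => fun k => g k + (-c))
      (j := fun g _ => fun k => g k + c)
    · intro g hg
      simp only [Finset.mem_filter, Finset.mem_univ, true_and, hEiff] at hg ⊢
      have := (wD_shift g c (-c)).mpr hg
      simpa using this
    · intro g hg
      simp only [Finset.mem_filter, Finset.mem_univ, true_and, hEiff] at hg ⊢
      have := (wD_shift g 0 c).mpr hg
      simpa using this
    · intro g _
      funext k
      ring
    · intro g _
      funext k
      ring
  have htotal := Finset.card_eq_sum_card_fiberwise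
    (f := E) (s := Finset.univ) (t := Finset.univ) (fun g _ => Finset.mem_univ _)
  have hconst : ∀ c ∈ (Finset.univ : Finset (ZMod (n+1))),
      (Finset.univ.filter (fun g : Fin n → ZMod (n+1) => E g = c)).card =
      (Finset.univ.filter (fun g : Fin n → ZMod (n+1) => E g = 0)).card :=
    fun c _ => hfib c
  rw [Finset.sum_congr rfl hconst, Finset.sum_const] at htotal
  simp only [Finset.card_univ, ZMod.card, smul_eq_mul] at htotal
  have hfun : Fintype.card (Fin n → ZMod (n+1)) = (n+1)^n := by
    rw [Fintype.card_fun, ZMod.card, Fintype.card_fin]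
  rw [hfun] at htotal
  have hX : (Finset.univ.filter (fun g : Fin n → ZMod (n+1) => E g = 0)).card = (n+1)^(n-1) := by
    have hpow : (n+1)^n = (n+1)^(n-1) * (n+1) := by
      rw [← pow_succ]
      congr 1
      omega
    have h2 : (n+1) * (n+1)^(n-1) = (n+1) *
        (Finset.univ.filter (fun g : Fin n → ZMod (n+1) => E g = 0)).card := by
      rw [← htotal, hpow]
      ring
    exact (Nat.eq_of_mul_eq_mul_left (by omega) h2).symm
  have hset : {g : Fin n → ZMod (n+1) | wD n g 0} =
      ↑(Finset.univ.filter (fun g : Fin n → ZMod (n+1) => E g = 0)) := by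
    ext g
    simp [hEiff]
  rw [hset, Set.ncard_coe_finset, hX]

end PFaux

/-- The number of parking functions of length `n` is `(n+1)^(n-1)`. -/
theorem stmt_0 (n : ℕ) :
    {f : Fin n → ℕ | IsParkingFunction n f}.ncard = (n + 1) ^ (n - 1) := by
  rcases Nat.eq_zero_or_pos n with rfl | hn
  · have h : {f : Fin 0 → ℕ | IsParkingFunction 0 f} = {fun i => i.elim0} := by
      ext f
      simp only [Set.mem_setOf_eq, Set.mem_singleton_iff]
      constructor
      · intro _
        funext i
        exact i.elim0
      · intro _
        exact ⟨Equiv.refl _, fun a => a.elim0, fun i => i.elim0⟩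
    rw [h]
    simp
  · have hinj : Function.Injective (fun (g : Fin n → ZMod (n+1)) (i : Fin n) => (g i).val) := by
      intro g g' h
      funext i
      exact ZMod.val_injective _ (congrFun h i)
    have key : {f : Fin n → ℕ | IsParkingFunction n f} =
        (fun (g : Fin n → ZMod (n+1)) (i : Fin n) => (g i).val) ''
          {g : Fin n → ZMod (n+1) | PFaux.wD n g 0} := by
      ext f
      simp only [Set.mem_setOf_eq, Set.mem_image]
      constructor
      · intro hf
        have hPF := (PFaux.isPF_iff_PF' f).mp hf
        have hval : ∀ i, ((f i : ZMod (n+1))).val = f i := fun i =>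
          ZMod.val_cast_of_lt (by have := (hPF.1 i).2; omega)
        refine ⟨fun i => (f i : ZMod (n+1)), ?_, by funext i; exact hval i⟩
        apply (PFaux.PF'_iff_wD _).mp
        have hfe : (fun i => ((f i : ZMod (n+1))).val) = f := funext hval
        rw [hfe]
        exact hPF
      · rintro ⟨g, hg, rfl⟩
        exact (PFaux.isPF_iff_PF' _).mpr ((PFaux.PF'_iff_wD g).mpr hg)
    rw [key, Set.ncard_image_of_injective _ hinj, PFaux.main_count hn]
end

section
/- The number of noncrossing partitions of the set {1,...,n} is the Catalan number (1/(n+1)) * binomial(2n, n). -/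
/-!
Encode a noncrossing partition of `{0, …, n-1}` by the map sending each element to the least
element of its block. For `n + 1` elements, let `i + 1` be the second element of the block of `0`
(or `n + 1` if `0` is a singleton). Then `1, …, i` carry an arbitrary noncrossing partition, and so
do `i + 1, …, n` once the block of `i + 1` is detached from `0`; conversely any such pair glues back
uniquely. This is the Catalan recurrence `C (n + 1) = ∑ i, C i * C (n - i)`.
-/

/-- A set partition of `{0, …, n-1}` is noncrossing if there is no quadruple
`a < b < c < d` with `a, c` in one block and `b, d` in a different block. -/
def IsNoncrossing {n : ℕ} (P : Finpartition (Finset.univ : Finset (Fin n))) : Prop :=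
  ¬ ∃ (a b c d : Fin n) (B B' : Finset (Fin n)), a < b ∧ b < c ∧ c < d ∧
      B ∈ P.parts ∧ B' ∈ P.parts ∧ B ≠ B' ∧ a ∈ B ∧ c ∈ B ∧ b ∈ B' ∧ d ∈ B'

instance {α β : Type*} [DecidableEq β] (g : α → β) : DecidableRel (Setoid.ker g) :=
  fun a b => decEq (g a) (g b)

theorem Finpartition.ext_part {α : Type*} [DecidableEq α] {s : Finset α}
    {P Q : Finpartition s} (h : P.part = Q.part) : P = Q := by
  have mem_parts : ∀ (R : Finpartition s) (B : Finset α), B ∈ R.parts ↔ ∃ a ∈ s, R.part a = B :=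
    fun R _ => ⟨fun hB => R.part_surjOn hB, by rintro ⟨a, ha, rfl⟩; exact R.part_mem.2 ha⟩
  ext B
  rw [mem_parts, mem_parts, h]

open Finset in
lemma isNoncrossing_iff {n : ℕ} {P : Finpartition (univ : Finset (Fin n))} :
    IsNoncrossing P ↔ ∀ a b c d : Fin n, a < b → b < c → c < d →
      P.part a = P.part c → P.part b = P.part d → P.part a = P.part b := by
  constructor
  · intro hP a b c d hab hbc hcd hac hbd
    by_contra hne
    refine hP ⟨a, b, c, d, _, _, hab, hbc, hcd, P.part_mem.2 (mem_univ a),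
      P.part_mem.2 (mem_univ b), hne, P.mem_part (mem_univ a), ?_, P.mem_part (mem_univ b), ?_⟩
    · rw [hac]; exact P.mem_part (mem_univ c)
    · rw [hbd]; exact P.mem_part (mem_univ d)
  · rintro hP ⟨a, b, c, d, B, B', hab, hbc, hcd, hB, hB', hne, haB, hcB, hbB', hdB'⟩
    apply hne
    rw [← P.part_eq_of_mem hB haB, ← P.part_eq_of_mem hB' hbB']
    exact hP a b c d hab hbc hcd ((P.part_eq_of_mem hB haB).trans (P.part_eq_of_mem hB hcB).symm)
      ((P.part_eq_of_mem hB' hbB').trans (P.part_eq_of_mem hB' hdB').symm)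

/-- Encoding of a noncrossing partition of `{0, …, n-1}`: `f i` is the least element of the block
of `i` for `i < n`, and `f i = 0` otherwise. The field `noncrossing` says that every `y` between
`f z` and `z` lies in a block starting no earlier than the block of `z`. -/
structure IsNCCode (n : ℕ) (f : ℕ → ℕ) : Prop where
  le_self : ∀ i, f i ≤ i
  noncrossing : ∀ {y z}, z < n → f z ≤ y → y ≤ z → f z ≤ f y
  eq_zero_of_le : ∀ {i}, n ≤ i → f i = 0

abbrev NCCode (n : ℕ) := {f : ℕ → ℕ // IsNCCode n f}

namespace IsNCCode

variable {n : ℕ} {f : ℕ → ℕ}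

lemma apply_zero (hf : IsNCCode n f) : f 0 = 0 :=
  Nat.le_zero.1 (hf.le_self 0)

lemma apply_apply (hf : IsNCCode n f) (i : ℕ) : f (f i) = f i := by
  rcases lt_or_ge i n with hi | hi
  · exact le_antisymm (hf.le_self _) (hf.noncrossing hi le_rfl (hf.le_self i))
  · rw [hf.eq_zero_of_le hi, hf.apply_zero]

lemma apply_lt (hf : IsNCCode n f) {i : ℕ} (hi : i < n) : f i < n :=
  (hf.le_self i).trans_lt hi

lemma eq_zero_or_lt (hf : IsNCCode n f) {j m : ℕ} (hj : f j = 0) (hjm : j ≤ m) :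
    f m = 0 ∨ j < f m := by
  rcases lt_or_ge m n with hm | hm
  · by_contra! h
    have := hf.noncrossing hm h.2 hjm
    omega
  · exact Or.inl (hf.eq_zero_of_le hm)

end IsNCCode

instance (n : ℕ) : Finite (NCCode n) := by
  refine Finite.of_injective (fun f (i : Fin n) => (⟨f.1 i, f.2.apply_lt i.2⟩ : Fin n)) ?_
  intro f g h
  ext m
  rcases lt_or_ge m n with hm | hm
  · exact congrArg Fin.val (congrFun h ⟨m, hm⟩)
  · rw [f.2.eq_zero_of_le hm, g.2.eq_zero_of_le hm]

instance : Unique (NCCode 0) where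
  default := ⟨fun _ => 0, fun _ => Nat.zero_le _, fun h => absurd h (Nat.not_lt_zero _),
    fun _ => rfl⟩
  uniq f := Subtype.ext <| funext fun m => f.2.eq_zero_of_le (Nat.zero_le m)

namespace NCCode

variable {n i : ℕ} {f g h : ℕ → ℕ}

def splitLeft (i : ℕ) (f : ℕ → ℕ) : ℕ → ℕ := fun k => if k < i then f (k + 1) - 1 else 0

def splitRight (i : ℕ) (f : ℕ → ℕ) : ℕ → ℕ := fun k => f (k + (i + 1)) - (i + 1)

def join (i : ℕ) (g h : ℕ → ℕ) : ℕ → ℕ := fun m =>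
  if m = 0 then 0
  else if m ≤ i then g (m - 1) + 1
  else if h (m - (i + 1)) = 0 then 0
  else h (m - (i + 1)) + (i + 1)

lemma isNCCode_splitLeft (hf : IsNCCode (n + 1) f) (hi : i ≤ n)
    (hne : ∀ m < i, f (m + 1) ≠ 0) : IsNCCode i (splitLeft i f) where
  le_self k := by
    unfold splitLeft
    have := hf.le_self (k + 1)
    split_ifs <;> omega
  noncrossing {y z} hz hzy hyz := by
    have hy : y < i := by omega
    simp only [splitLeft, if_pos hz, if_pos hy] at hzy ⊢
    have := hne z hz
    have := hf.noncrossing (y := y + 1) (z := z + 1) (by omega) (by omega) (by omega)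
    omega
  eq_zero_of_le hk := if_neg (by omega)

lemma isNCCode_splitRight (hf : IsNCCode (n + 1) f) (h0 : f (i + 1) = 0) :
    IsNCCode (n - i) (splitRight i f) where
  le_self k := by
    have := hf.le_self (k + (i + 1))
    unfold splitRight
    omega
  noncrossing {y z} hz hzy hyz := by
    unfold splitRight at hzy ⊢
    rcases hf.eq_zero_or_lt h0 (m := z + (i + 1)) (by omega) with hz0 | hzi
    · omega
    · have := hf.noncrossing (y := y + (i + 1)) (z := z + (i + 1)) (by omega) (by omega)
        (by omega)
      omega
  eq_zero_of_le {k} hk := by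
    simp only [splitRight, hf.eq_zero_of_le (i := k + (i + 1)) (by omega), Nat.zero_sub]

lemma isNCCode_join (hg : IsNCCode i g) (hh : IsNCCode (n - i) h) (hi : i ≤ n) :
    IsNCCode (n + 1) (join i g h) where
  le_self m := by
    have := hg.le_self (m - 1)
    have := hh.le_self (m - (i + 1))
    unfold join
    split_ifs <;> omega
  noncrossing {y z} hz hzy hyz := by
    have hg' : 0 < z → z ≤ i → g (z - 1) ≤ y - 1 → g (z - 1) ≤ g (y - 1) :=
      fun hz0 hzi hle => hg.noncrossing (by omega) hle (by omega)
    have hh' : i < y → h (z - (i + 1)) ≤ y - (i + 1) → h (z - (i + 1)) ≤ h (y - (i + 1)) :=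
      fun hiy hle => hh.noncrossing (by omega) hle (by omega)
    unfold join at hzy ⊢
    split_ifs at hzy ⊢ <;> omega
  eq_zero_of_le {m} hm := by
    have := hh.eq_zero_of_le (i := m - (i + 1)) (by omega)
    simp only [join, this]
    split_ifs <;> omega

lemma splitLeft_join (hg : IsNCCode i g) : splitLeft i (join i g h) = g := by
  funext k
  by_cases hk : k < i
  · simp [splitLeft, join, hk, show k + 1 ≤ i by omega]
  · rw [splitLeft, if_neg hk, hg.eq_zero_of_le (by omega)]

lemma splitRight_join : splitRight i (join i g h) = h := by
  funext k
  simp only [splitRight, join, if_neg (show k + (i + 1) ≠ 0 by omega),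
    if_neg (show ¬k + (i + 1) ≤ i by omega), Nat.add_sub_cancel]
  split_ifs <;> omega

lemma join_splitLeft_splitRight (hf : IsNCCode (n + 1) f) (h0 : f (i + 1) = 0)
    (hne : ∀ m < i, f (m + 1) ≠ 0) : join i (splitLeft i f) (splitRight i f) = f := by
  funext m
  rcases Nat.eq_zero_or_pos m with rfl | hm
  · simp [join, hf.apply_zero]
  rcases le_or_gt m i with hmi | hmi
  · obtain ⟨k, rfl⟩ : ∃ k, m = k + 1 := ⟨m - 1, by omega⟩
    have := hne k (by omega)
    simp only [join, splitLeft, if_neg (Nat.succ_ne_zero k), if_pos hmi, Nat.add_sub_cancel,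
      if_pos (show k < i by omega)]
    omega
  · obtain ⟨k, rfl⟩ : ∃ k, m = k + (i + 1) := ⟨m - (i + 1), by omega⟩
    have := hf.eq_zero_or_lt h0 (m := k + (i + 1)) (by omega)
    simp only [join, splitRight, if_neg (show k + (i + 1) ≠ 0 by omega),
      if_neg (show ¬k + (i + 1) ≤ i by omega), Nat.add_sub_cancel]
    split_ifs <;> omega

/-- `splitIndex f + 1` is the second element of the block of `0`, or `n + 1` if that block
is `{0}`. -/
def splitIndex (f : NCCode (n + 1)) : Fin (n + 1) :=
  ⟨Nat.find (⟨n, f.2.eq_zero_of_le le_rfl⟩ : ∃ i, f.1 (i + 1) = 0),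
    Nat.lt_succ_of_le (Nat.find_min' _ (f.2.eq_zero_of_le le_rfl))⟩

lemma splitIndex_eq_iff {f : NCCode (n + 1)} {i : Fin (n + 1)} :
    splitIndex f = i ↔ f.1 (i + 1) = 0 ∧ ∀ m < (i : ℕ), f.1 (m + 1) ≠ 0 := by
  rw [Fin.ext_iff]
  exact Nat.find_eq_iff _

lemma join_succ_eq_zero (hh : IsNCCode (n - i) h) : join i g h (i + 1) = 0 := by
  simp [join, hh.apply_zero]

lemma join_succ_ne_zero {m : ℕ} (hm : m < i) : join i g h (m + 1) ≠ 0 := by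
  simp [join, show m + 1 ≤ i by omega]

def fiberEquiv (i : Fin (n + 1)) :
    {f : NCCode (n + 1) // splitIndex f = i} ≃ NCCode i × NCCode (n - i) where
  toFun f :=
    have hf := splitIndex_eq_iff.1 f.2
    (⟨splitLeft i f.1.1, isNCCode_splitLeft f.1.2 i.is_le hf.2⟩,
      ⟨splitRight i f.1.1, isNCCode_splitRight f.1.2 hf.1⟩)
  invFun p := ⟨⟨join i p.1.1 p.2.1, isNCCode_join p.1.2 p.2.2 i.is_le⟩,
    splitIndex_eq_iff.2 ⟨join_succ_eq_zero p.2.2, fun _ hm => join_succ_ne_zero hm⟩⟩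
  left_inv f := by
    have hf := splitIndex_eq_iff.1 f.2
    exact Subtype.ext <| Subtype.ext <| join_splitLeft_splitRight f.1.2 hf.1 hf.2
  right_inv p := Prod.ext (Subtype.ext (splitLeft_join p.1.2)) (Subtype.ext splitRight_join)

end NCCode

theorem card_NCCode (n : ℕ) : Nat.card (NCCode n) = catalan n := by
  induction n using Nat.strong_induction_on with
  | _ n ih =>
    cases n with
    | zero => rw [Nat.card_unique, catalan_zero]
    | succ n =>
      rw [← Nat.card_congr (Equiv.sigmaFiberEquiv NCCode.splitIndex), Nat.card_sigma,
        catalan_succ]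
      refine Finset.sum_congr rfl fun i _ => ?_
      rw [Nat.card_congr (NCCode.fiberEquiv i), Nat.card_prod, ih i (by omega),
        ih (n - i) (by omega)]

namespace Finpartition

open Finset

variable {n : ℕ} (P : Finpartition (univ : Finset (Fin n)))

def blockMin (a : Fin n) : Fin n :=
  (P.part a).min' ⟨a, P.mem_part (mem_univ a)⟩

lemma blockMin_mem (a : Fin n) : blockMin P a ∈ P.part a :=
  min'_mem _ _

lemma blockMin_le_of_mem {a b : Fin n} (hb : b ∈ P.part a) : blockMin P a ≤ b :=
  min'_le _ _ hb

lemma blockMin_le (a : Fin n) : blockMin P a ≤ a :=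
  blockMin_le_of_mem P (P.mem_part (mem_univ a))

lemma part_blockMin (a : Fin n) : P.part (blockMin P a) = P.part a :=
  P.part_eq_of_mem (P.part_mem.2 (mem_univ a)) (blockMin_mem P a)

lemma blockMin_eq_blockMin_iff {a b : Fin n} :
    blockMin P a = blockMin P b ↔ P.part a = P.part b := by
  refine ⟨fun h => ?_, fun h => by simp only [blockMin, h]⟩
  rw [← part_blockMin P a, h, part_blockMin]

def code : ℕ → ℕ := fun m => if h : m < n then blockMin P ⟨m, h⟩ else 0

lemma code_of_lt {m : ℕ} (h : m < n) : code P m = blockMin P ⟨m, h⟩ :=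
  dif_pos h

lemma isNCCode_code (hP : IsNoncrossing P) : IsNCCode n (code P) where
  le_self m := by
    unfold code
    split_ifs with h
    · exact blockMin_le P ⟨m, h⟩
    · exact Nat.zero_le m
  noncrossing {y z} hz hzy hyz := by
    have hy : y < n := hyz.trans_lt hz
    rw [code_of_lt P hz] at hzy ⊢
    rw [code_of_lt P hy]
    set y' : Fin n := ⟨y, hy⟩
    set z' : Fin n := ⟨z, hz⟩
    by_contra! hlt
    have hne : P.part y' ≠ P.part z' := fun h =>
      hlt.ne (congrArg Fin.val ((blockMin_eq_blockMin_iff P).2 h))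
    have hby : blockMin P z' < y' := by
      refine lt_of_le_of_ne hzy fun h => hne ?_
      rw [← h, part_blockMin]
    have hyz : y' < z' := lt_of_le_of_ne hyz fun h => hne (by rw [h])
    have := isNoncrossing_iff.1 hP _ _ _ _ hlt hby hyz (part_blockMin P y') (part_blockMin P z')
    rw [part_blockMin, part_blockMin] at this
    exact hne this
  eq_zero_of_le hm := dif_neg (by omega)

lemma code_injective : Function.Injective (code (n := n)) := by
  intro P Q h
  have hmin : ∀ a, blockMin P a = blockMin Q a := fun a =>
    Fin.ext <| by simpa only [code_of_lt _ a.2] using congrFun h a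
  refine ext_part <| funext fun a => Finset.ext fun b => ?_
  rw [P.mem_part_iff_part_eq_part (mem_univ b) (mem_univ a),
    Q.mem_part_iff_part_eq_part (mem_univ b) (mem_univ a),
    ← blockMin_eq_blockMin_iff, ← blockMin_eq_blockMin_iff, hmin, hmin]

variable {f : ℕ → ℕ}

def ofCode (f : ℕ → ℕ) : Finpartition (univ : Finset (Fin n)) :=
  Finpartition.ofSetoid (Setoid.ker fun a : Fin n => f a)

lemma mem_part_ofCode_iff {a b : Fin n} : b ∈ (ofCode f).part a ↔ f a = f b :=
  Finpartition.mem_part_ofSetoid_iff_rel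

lemma part_ofCode_eq_iff {a b : Fin n} : (ofCode f).part a = (ofCode f).part b ↔ f a = f b := by
  rw [← (ofCode f).mem_part_iff_part_eq_part (mem_univ a) (mem_univ b), mem_part_ofCode_iff,
    eq_comm]

lemma isNoncrossing_ofCode (hf : IsNCCode n f) : IsNoncrossing (ofCode (n := n) f) := by
  refine isNoncrossing_iff.2 fun a b c d hab hbc hcd hac hbd => ?_
  rw [part_ofCode_eq_iff] at hac hbd ⊢
  rw [Fin.lt_def] at hab hbc hcd
  have hcb : f c ≤ f b := hf.noncrossing c.2 (by have := hf.le_self a; omega) hbc.le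
  have hdc : f d ≤ f c := hf.noncrossing d.2 (by have := hf.le_self b; omega) hcd.le
  omega

lemma blockMin_ofCode (hf : IsNCCode n f) {m : ℕ} (hm : m < n) :
    blockMin (ofCode f) ⟨m, hm⟩ = ⟨f m, hf.apply_lt hm⟩ := by
  refine le_antisymm (blockMin_le_of_mem _ ?_) (le_min' _ _ _ fun y hy => ?_)
  · exact mem_part_ofCode_iff.2 (hf.apply_apply m).symm
  · change f m ≤ y
    rw [mem_part_ofCode_iff.1 hy]
    exact hf.le_self y

lemma code_ofCode (hf : IsNCCode n f) : code (ofCode (n := n) f) = f := by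
  funext m
  rcases lt_or_ge m n with hm | hm
  · rw [code_of_lt _ hm, blockMin_ofCode hf hm]
  · rw [code, dif_neg (by omega), hf.eq_zero_of_le hm]

end Finpartition

def noncrossingEquivNCCode (n : ℕ) :
    {P : Finpartition (Finset.univ : Finset (Fin n)) // IsNoncrossing P} ≃ NCCode n where
  toFun P := ⟨P.1.code, P.1.isNCCode_code P.2⟩
  invFun f := ⟨Finpartition.ofCode f.1, Finpartition.isNoncrossing_ofCode f.2⟩
  left_inv P := Subtype.ext <| Finpartition.code_injective <|
    Finpartition.code_ofCode (P.1.isNCCode_code P.2)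
  right_inv f := Subtype.ext <| Finpartition.code_ofCode f.2

/-- The number of noncrossing partitions of `{1, …, n}` is the Catalan number
`(1/(n+1)) * C(2n, n)`. -/
theorem stmt_4 (n : ℕ) :
    {P : Finpartition (Finset.univ : Finset (Fin n)) | IsNoncrossing P}.ncard =
      Nat.choose (2 * n) n / (n + 1) := by
  rw [← Nat.card_coe_set_eq, Set.coe_ofPred, Nat.card_congr (noncrossingEquivNCCode n),
    card_NCCode, catalan_eq_centralBinom_div, Nat.centralBinom]
end

section
/- The sum over all partitions λ with |λ| ≤ n of (k(n+1))!·(n+1−|λ|) / ((n+1)·m_λ·(k(n+1)−ℓ(λ))!) equals (1/(k(n+1)+1)) * binomial((k+1)(n+1), n+1), the k-Fuss-Catalan number for n+1. -/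
/-!
With `K = k(n+1)`, the number `K! / (m_λ (K - ℓ(λ))!)` counts the functions `f : Fin K → ℕ` whose
nonzero values are the parts of `λ`: these functions form one orbit of the permutations of
`Fin K`, and the stabiliser of any of them permutes each level set, so it has order
`m_λ (K - ℓ(λ))!`. Summing over `λ ⊢ m` therefore counts all weak compositions of `m` into `K`
parts, which is `K.multichoose m`, and the hockey-stick identity gives
`∑_{m ≤ n} (n + 1 - m) · K.multichoose m = C(n + 1 + K, K + 1)`,
which is `(n + 1) / (K + 1) · C(n + 1 + K, n + 1)`.

Since the statement uses truncating division, every summand has to be exact. The compositions of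
shape `λ` are closed under permuting coordinates, so each coordinate contributes the same total
and `K` divides `m` times their number; as `n + 1 ∣ K`, this makes `n + 1` divide each numerator.
-/

/-- `m_λ = ∏_i m_i(λ)!`, the product of factorials of multiplicities of parts. -/
def mfac (lam : Multiset ℕ) : ℕ := lam.toFinset.prod fun i => (lam.count i).factorial

open Finset Nat

section ValueMultiset

variable {α β : Type*} [Fintype α]

theorem exists_map_univ_val_eq (μ : Multiset β) (hμ : Multiset.card μ = Fintype.card α) :
    ∃ f : α → β, univ.val.map f = μ := by
  have e : α ≃ Fin μ.toList.length :=
    Fintype.equivFinOfCardEq (by rw [Multiset.length_toList, hμ])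
  refine ⟨μ.toList.get ∘ e, ?_⟩
  rw [← Multiset.map_map, Multiset.map_univ_val_equiv, Fin.univ_val_map, List.ofFn_get,
    Multiset.coe_toList]

theorem map_univ_val_comp_perm (f : α → β) (σ : Equiv.Perm α) :
    univ.val.map (f ∘ σ) = univ.val.map f := by
  rw [← Multiset.map_map, Multiset.map_univ_val_equiv]

theorem count_map_univ_val [DecidableEq β] (f : α → β) (v : β) :
    (univ.val.map f).count v = Fintype.card {a // f a = v} := by
  classical
  rw [Multiset.count_map, Fintype.card_subtype, Finset.card_def, Finset.filter_val]
  simp only [eq_comm]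

theorem exists_perm_comp_eq_of_map_univ_val_eq {f g : α → β}
    (h : univ.val.map f = univ.val.map g) : ∃ σ : Equiv.Perm α, f ∘ σ = g := by
  classical
  have hfiber (v : β) : Fintype.card {a // g a = v} = Fintype.card {a // f a = v} := by
    convert (congrArg (Multiset.count v) h).symm using 1 <;> rw [count_map_univ_val]
  exact ⟨Equiv.ofFiberEquiv fun v => Fintype.equivOfCardEq (hfiber v),
    funext (Equiv.ofFiberEquiv_map _)⟩

theorem mem_orbit_iff_map_univ_val_eq {f g : α → β} :
    g ∈ MulAction.orbit (Equiv.Perm α)ᵈᵐᵃ f ↔ univ.val.map g = univ.val.map f := by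
  have smul_eq (c : (Equiv.Perm α)ᵈᵐᵃ) : c • f = f ∘ ⇑(DomMulAct.mk.symm c : Equiv.Perm α) :=
    funext fun a => DomMulAct.smul_apply c f a
  constructor
  · rintro ⟨c, rfl⟩
    exact (congrArg (univ.val.map ·) (smul_eq c)).trans (map_univ_val_comp_perm f _)
  · intro h
    obtain ⟨σ, hσ⟩ := exists_perm_comp_eq_of_map_univ_val_eq h.symm
    exact ⟨DomMulAct.mk σ, (smul_eq _).trans (by rw [Equiv.symm_apply_apply, hσ])⟩

theorem natCard_map_univ_val_eq_mul_prod [DecidableEq α] [DecidableEq β] (f : α → β) :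
    Nat.card {g : α → β // univ.val.map g = univ.val.map f} *
      ∏ v ∈ (univ.val.map f).toFinset, ((univ.val.map f).count v)! = (Fintype.card α)! := by
  have horbit : Nat.card {g : α → β // univ.val.map g = univ.val.map f} =
      (MulAction.stabilizer (Equiv.Perm α)ᵈᵐᵃ f).index := by
    rw [MulAction.index_stabilizer, ← Nat.card_coe_set_eq]
    exact Nat.card_congr (Equiv.subtypeEquivRight fun _ => mem_orbit_iff_map_univ_val_eq.symm)
  have hstab : Nat.card (MulAction.stabilizer (Equiv.Perm α)ᵈᵐᵃ f) =
      Fintype.card {σ : Equiv.Perm α // f ∘ σ = f} := by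
    rw [← Nat.card_eq_fintype_card]
    exact Nat.card_congr ((Equiv.subtypeEquivRight fun _ => DomMulAct.mem_stabilizer_iff).trans
      (DomMulAct.mk.symm.subtypeEquiv fun _ => Iff.rfl))
  have hprod : ∏ v ∈ (univ.val.map f).toFinset, ((univ.val.map f).count v)! =
      Fintype.card {σ : Equiv.Perm α // f ∘ σ = f} := by
    rw [DomMulAct.stabilizer_card']
    exact Finset.prod_congr rfl fun v _ => by rw [count_map_univ_val]
  rw [horbit, hprod, ← hstab, mul_comm, Subgroup.card_mul_index,
    Nat.card_congr DomMulAct.mk.symm, Nat.card_perm, Nat.card_eq_fintype_card]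

end ValueMultiset

theorem Multiset.filter_ne_zero_eq_iff {μ t : Multiset ℕ} (ht : 0 ∉ t) :
    μ.filter (· ≠ 0) = t ↔ μ = t + replicate (card μ - card t) 0 := by
  constructor
  · rintro rfl
    have hsplit := Multiset.filter_add_not (· ≠ 0) μ
    have hzeros :
        μ.filter (fun a => ¬a ≠ 0) = replicate (card μ - card (μ.filter (· ≠ 0))) 0 := by
      refine Multiset.eq_replicate.2 ⟨?_, fun a ha => by simpa using Multiset.of_mem_filter ha⟩
      have := congrArg card hsplit
      rw [Multiset.card_add] at this
      omega
    rw [← hzeros, hsplit]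
  · rintro h
    rw [h, Multiset.filter_add, Multiset.filter_eq_self.2 fun a ha => by rintro rfl; exact ht ha,
      Multiset.filter_eq_nil.2 fun a ha => by simp [Multiset.eq_of_mem_replicate ha], add_zero]

theorem Nat.Partition.card_parts_le {m : ℕ} (P : m.Partition) : Multiset.card P.parts ≤ m := by
  have := Multiset.card_nsmul_le_sum fun x hx => Nat.one_le_iff_ne_zero.2 (P.parts_pos hx).ne'
  rwa [smul_eq_mul, mul_one, P.parts_sum] at this

theorem mfac_eq_prod_of_subset {s : Multiset ℕ} {S : Finset ℕ} (h : s.toFinset ⊆ S) :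
    mfac s = ∏ v ∈ S, (s.count v)! :=
  Finset.prod_subset h fun v _ hv => by
    rw [Multiset.count_eq_zero.2 (by simpa using hv), factorial_zero]

theorem mfac_add_replicate_zero {t : Multiset ℕ} (ht : 0 ∉ t) (r : ℕ) :
    mfac (t + Multiset.replicate r 0) = mfac t * r ! := by
  have h0 : 0 ∉ t.toFinset := by simpa using ht
  rw [mfac_eq_prod_of_subset (S := insert 0 t.toFinset) (by
    intro v; simp only [Multiset.toFinset_add, mem_union, Multiset.mem_toFinset, mem_insert,
      Multiset.mem_replicate]; tauto),
    prod_insert h0, mfac, mul_comm]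
  simp only [Multiset.count_add, Multiset.count_replicate_self, Multiset.count_eq_zero.2 ht,
    zero_add]
  congr 1
  refine Finset.prod_congr rfl fun v hv => ?_
  rw [Multiset.count_replicate, if_neg (by rintro rfl; exact h0 hv), add_zero]

-- The `piAntidiag` condition follows from the shape condition (`mem_compositionsOfShape`);
-- it is there to make this a `Finset`.
def compositionsOfShape (α : Type*) [Fintype α] [DecidableEq α] (t : Multiset ℕ) :
    Finset (α → ℕ) :=
  {f ∈ piAntidiag univ t.sum | (univ.val.map f).filter (· ≠ 0) = t}

section Compositions

variable {α : Type*} [Fintype α] [DecidableEq α]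

theorem mem_compositionsOfShape {t : Multiset ℕ} {f : α → ℕ} :
    f ∈ compositionsOfShape α t ↔ (univ.val.map f).filter (· ≠ 0) = t := by
  rw [compositionsOfShape, mem_filter, mem_piAntidiag, and_iff_right_iff_imp]
  rintro rfl
  refine ⟨?_, fun i _ => mem_univ i⟩
  rw [Finset.sum_eq_multiset_sum]
  exact (Nat.Partition.ofMultiset (univ.val.map f)).parts_sum.symm

theorem card_compositionsOfShape_mul {t : Multiset ℕ} (ht : 0 ∉ t)
    (hcard : Multiset.card t ≤ Fintype.card α) :
    #(compositionsOfShape α t) * (mfac t * (Fintype.card α - Multiset.card t)!) =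
      (Fintype.card α)! := by
  set μ := t + Multiset.replicate (Fintype.card α - Multiset.card t) 0
  obtain ⟨f, hf⟩ := exists_map_univ_val_eq (α := α) μ (by simp [μ, hcard])
  have hcount := natCard_map_univ_val_eq_mul_prod f
  rw [hf] at hcount
  rw [← mfac_add_replicate_zero ht, ← hcount]
  congr 1
  rw [← Nat.card_eq_finsetCard]
  refine Nat.card_congr (Equiv.subtypeEquivRight fun g => ?_)
  rw [mem_compositionsOfShape, Multiset.filter_ne_zero_eq_iff ht, Multiset.card_map,
    Finset.card_val, Finset.card_univ]

theorem sum_sum_apply_eq_card_smul {M : Type*} [AddCommMonoid M] {S : Finset (α → M)}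
    (hS : ∀ f ∈ S, ∀ σ : Equiv.Perm α, f ∘ σ ∈ S) (j : α) :
    ∑ f ∈ S, ∑ i, f i = Fintype.card α • ∑ f ∈ S, f j := by
  rw [Finset.sum_comm, ← Finset.card_univ, ← Finset.sum_const]
  refine Finset.sum_congr rfl fun i _ => ?_
  exact Finset.sum_nbij' (· ∘ Equiv.swap i j) (· ∘ Equiv.swap i j) (fun f hf => hS f hf _)
    (fun f hf => hS f hf _) (fun f _ => by ext; simp) (fun f _ => by ext; simp) (fun f _ => by simp)

theorem card_dvd_sum_mul_card_compositionsOfShape (t : Multiset ℕ) :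
    Fintype.card α ∣ t.sum * #(compositionsOfShape α t) := by
  set C := compositionsOfShape α t
  have hsum : ∑ f ∈ C, ∑ i, f i = t.sum * #C := by
    have hf : ∀ f ∈ C, ∑ i, f i = t.sum := fun f hf => (mem_piAntidiag.1 (mem_filter.1 hf).1).1
    rw [sum_congr rfl hf, sum_const, smul_eq_mul, mul_comm]
  have hperm : ∀ f ∈ C, ∀ σ : Equiv.Perm α, f ∘ σ ∈ C := fun f hf σ => by
    rwa [mem_compositionsOfShape, map_univ_val_comp_perm, ← mem_compositionsOfShape]
  rw [← hsum]
  rcases isEmpty_or_nonempty α with hα | ⟨⟨j⟩⟩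
  · simp
  · exact ⟨_, sum_sum_apply_eq_card_smul hperm j⟩

theorem card_piAntidiag_univ (m : ℕ) :
    #(piAntidiag (univ : Finset α) m) = (Fintype.card α).multichoose m := by
  rw [← map_sym_eq_piAntidiag, card_map, sym_univ, Finset.card_univ, Sym.card_sym_eq_multichoose]

theorem sum_card_compositionsOfShape (m : ℕ) :
    ∑ P : m.Partition, #(compositionsOfShape α P.parts) = (Fintype.card α).multichoose m := by
  rw [← card_piAntidiag_univ, card_eq_sum_card_fiberwise
    (f := fun f => (univ.val.map f).filter (· ≠ 0)) (t := univ.image Nat.Partition.parts),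
    sum_image fun P _ Q _ h => Nat.Partition.ext h]
  · refine Finset.sum_congr rfl fun P _ => ?_
    rw [compositionsOfShape, P.parts_sum]
  · intro f hf
    rw [mem_coe] at hf
    rw [mem_coe, mem_image]
    exact ⟨Nat.Partition.ofSums m _ (by rw [← Finset.sum_eq_multiset_sum, (mem_piAntidiag.1 hf).1]),
      mem_univ _, rfl⟩

end Compositions

theorem sum_range_sub_mul_multichoose (N K : ℕ) :
    ∑ m ∈ range N, (N - m) * K.multichoose m = (N + K).choose (K + 1) := by
  induction N with
  | zero => simp
  | succ N ih =>
    have hsplit : ∀ m ∈ range (N + 1),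
        (N + 1 - m) * K.multichoose m = (N - m) * K.multichoose m + K.multichoose m := by
      intro m hm
      rw [mem_range] at hm
      rw [show N + 1 - m = N - m + 1 by omega, add_one_mul]
    rw [sum_congr rfl hsplit, sum_add_distrib, sum_range_succ, Nat.sub_self, zero_mul, add_zero, ih,
      sum_range_multichoose, add_right_comm, choose_succ_succ', add_comm]

theorem Nat.div_eq_div_of_mul_eq_mul {a b c d : ℕ} (hc : 0 < c) (hd : 0 < d) (hca : c ∣ a)
    (h : a * d = b * c) : a / c = b / d := by
  obtain ⟨q, rfl⟩ := hca
  have hb : b = q * d := Nat.eq_of_mul_eq_mul_right hc (by rw [← h]; ring)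
  rw [hb, Nat.mul_div_cancel_left q hc, Nat.mul_div_cancel q hd]

section FinCompositions

variable {K m : ℕ} (P : m.Partition)

theorem factorial_mul_div_eq_card_compositionsOfShape_mul_div (hmK : m ≤ K) (a N : ℕ) :
    K ! * a / (N * mfac P.parts * (K - Multiset.card P.parts)!) =
      #(compositionsOfShape (Fin K) P.parts) * a / N := by
  have hc := card_compositionsOfShape_mul (α := Fin K) (fun h => (P.parts_pos h).false)
    (by rw [Fintype.card_fin]; exact P.card_parts_le.trans hmK)
  rw [Fintype.card_fin] at hc
  have hpos : 0 < mfac P.parts * (K - Multiset.card P.parts)! :=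
    Nat.mul_pos (prod_pos fun i _ => factorial_pos _) (factorial_pos _)
  rw [← hc, mul_right_comm, mul_assoc N, Nat.mul_div_mul_right _ _ hpos]

theorem dvd_card_compositionsOfShape_mul_sub {N : ℕ} (hNK : N ∣ K) :
    N ∣ #(compositionsOfShape (Fin K) P.parts) * (N - m) := by
  have hK : K ∣ m * #(compositionsOfShape (Fin K) P.parts) := by
    simpa only [P.parts_sum, Fintype.card_fin] using
      card_dvd_sum_mul_card_compositionsOfShape (α := Fin K) P.parts
  rw [Nat.mul_sub, mul_comm _ m]
  exact Nat.dvd_sub (dvd_mul_left N _) (hNK.trans hK)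

end FinCompositions

theorem sum_sum_card_compositionsOfShape_mul_sub (N K : ℕ) :
    ∑ m ∈ range N, ∑ P : m.Partition, #(compositionsOfShape (Fin K) P.parts) * (N - m) =
      (N + K).choose (K + 1) := by
  simp_rw [← sum_mul, sum_card_compositionsOfShape, Fintype.card_fin, mul_comm _ (N - _)]
  exact sum_range_sub_mul_multichoose N K

/-- The sum over all partitions `λ` with `|λ| ≤ n` of
`(k(n+1))!·(n+1-|λ|) / ((n+1)·m_λ·(k(n+1)-ℓ(λ))!)` equals the `k`-Fuss–Catalan number
`(1/(k(n+1)+1)) * C((k+1)(n+1), n+1)`. -/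
theorem stmt_12 (k n : ℕ) (hk : 0 < k) :
    ∑ m ∈ Finset.range (n + 1), ∑ P : Nat.Partition m,
        (k * (n + 1)).factorial * (n + 1 - m) /
          ((n + 1) * mfac P.parts * (k * (n + 1) - Multiset.card P.parts).factorial) =
      Nat.choose ((k + 1) * (n + 1)) (n + 1) / (k * (n + 1) + 1) := by
  set N := n + 1
  set K := k * N
  let c {m : ℕ} (P : m.Partition) : ℕ := #(compositionsOfShape (Fin K) P.parts)
  have hdvd (m : ℕ) (P : m.Partition) : N ∣ c P * (N - m) :=
    dvd_card_compositionsOfShape_mul_sub P (Dvd.intro_left k rfl)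
  have hsum := sum_sum_card_compositionsOfShape_mul_sub N K
  have hchoose : (N + K).choose (K + 1) * (K + 1) = (N + K).choose N * N := by
    rw [choose_succ_right_eq, Nat.add_sub_cancel, choose_symm_add]
  calc _ = ∑ m ∈ range N, ∑ P : m.Partition, c P * (N - m) / N :=
        sum_congr rfl fun m hm => sum_congr rfl fun P _ =>
          factorial_mul_div_eq_card_compositionsOfShape_mul_div P
            ((mem_range.1 hm).le.trans (Nat.le_mul_of_pos_left N hk)) _ _
    _ = (∑ m ∈ range N, ∑ P : m.Partition, c P * (N - m)) / N := by
        rw [Nat.sum_div fun m _ => dvd_sum fun P _ => hdvd m P]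
        exact sum_congr rfl fun m _ => (Nat.sum_div fun P _ => hdvd m P).symm
    _ = (N + K).choose N / (K + 1) := by
        rw [hsum]
        exact Nat.div_eq_div_of_mul_eq_mul n.succ_pos K.succ_pos
          (hsum ▸ dvd_sum fun m _ => dvd_sum fun P _ => hdvd m P) hchoose
    _ = _ := by rw [show (k + 1) * N = N + K by ring]
end

section
/- There is a type-preserving bijection between r-strips in the rectangular shape (n^{kn}) and k-Fuss binomial paths of length (k+1)n, i.e., lattice paths from (0,0) to (n,kn) with unit east and north steps; in particular the number of r-strips in (n^{kn}) is binomial((k+1)n, n). -/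
/-- The multiset of lengths of maximal runs of `true` (east steps) in a list of steps. -/
def trueRuns (p : List Bool) : Multiset ℕ :=
  ↑(((p.splitBy (· == ·)).filter fun g => g.any id).map List.length)

/-- The type of the r-strip encoded by the list `l` of heights of the horizontal steps of
its lattice path (column `j`, 0-indexed, has its top edge at height `t j`): a box is present
in column `j` iff the step height is `< t j`, and blocks are maximal runs of adjacent boxes
at equal heights. -/
def rstripType (t : ℕ → ℕ) (l : List ℕ) : Multiset ℕ :=
  ↑(((((l.zipIdx.map Prod.swap).map fun p => if p.2 < t p.1 then some p.2 else none).splitBy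
      fun a b => a == b && a.isSome).filter fun g => g.any Option.isSome).map List.length)

/-! An r-strip in `(n^m)` is recorded by the weakly increasing heights of the horizontal steps
of its path; its type is the multiset of lengths of the maximal runs of equal heights `< m`.
The half-turn rotation of the rectangle, `hᵢ ↦ m - h_{n-1-i}`, maps these sequences to the
east-step heights of the lattice paths from `(0,0)` to `(n,m)`, and turns those runs into the
maximal runs of east steps at a common positive height, i.e. the ascents off `y = 0`. The height
sequences are the multisets of size `n` from `{0, …, m}`, so there are `C(m + n, n)` of them. -/

namespace List

variable {α β : Type*}

theorem splitBy_map (f : α → β) (r : β → β → Bool) (l : List α) :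
    (l.map f).splitBy r = (l.splitBy fun a b => r (f a) (f b)).map (map f) := by
  rw [splitBy_eq_iff]
  refine ⟨by rw [← map_flatten, flatten_splitBy], by simp [nil_notMem_splitBy], ?_, ?_⟩
  · simp only [mem_map]
    rintro _ ⟨g, hg, rfl⟩
    exact (isChain_map f).2 (isChain_of_mem_splitBy hg)
  · rw [isChain_map]
    refine (isChain_getLast_head_splitBy _ l).imp ?_
    rintro g h ⟨hg, hh, hr⟩
    exact ⟨by simpa using hg, by simpa using hh, by simpa [getLast_map, head_map] using hr⟩

theorem splitBy_reverse {r : α → α → Bool} (hr : ∀ a b, r a b = r b a) (l : List α) :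
    l.reverse.splitBy r = ((l.splitBy r).map reverse).reverse := by
  rw [splitBy_eq_iff]
  refine ⟨by rw [← reverse_flatten, flatten_splitBy], by simp [nil_notMem_splitBy], ?_, ?_⟩
  · simp only [mem_reverse, mem_map]
    rintro _ ⟨g, hg, rfl⟩
    exact isChain_reverse.2 ((isChain_of_mem_splitBy hg).imp fun a b h => by rwa [hr])
  · rw [isChain_reverse, isChain_map]
    refine (isChain_getLast_head_splitBy r l).imp ?_
    rintro g h ⟨hg, hh, hgh⟩
    exact ⟨by simpa using hh, by simpa using hg, by rwa [getLast_reverse, head_reverse, hr]⟩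

theorem splitBy_cons_of_not_rel {r : α → α → Bool} {a : α} {l : List α}
    (h : ∀ b ∈ l.head?, r a b = false) : (a :: l).splitBy r = [a] :: l.splitBy r :=
  splitBy_append (l := [a]) (by simpa using h)

theorem exists_eq_cons_of_splitBy_cons_eq {r : α → α → Bool} {b : α} {l g : List α}
    {gs : List (List α)} (h : (b :: l).splitBy r = g :: gs) : ∃ g', g = b :: g' := by
  obtain ⟨hl, hnil, -⟩ := splitBy_eq_iff.1 h
  cases g with
  | nil => simp at hnil
  | cons c g' =>
    simp only [flatten_cons, cons_append, cons.injEq] at hl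
    exact ⟨g', by rw [hl.1]⟩

theorem splitBy_cons_cons_of_rel {r : α → α → Bool} {a b : α} {l g : List α}
    {gs : List (List α)} (hab : r a b) (h : (b :: l).splitBy r = g :: gs) :
    (a :: b :: l).splitBy r = (a :: g) :: gs := by
  obtain ⟨g, rfl⟩ := exists_eq_cons_of_splitBy_cons_eq h
  obtain ⟨hl, hnil, hchain, hbd⟩ := splitBy_eq_iff.1 h
  rw [splitBy_eq_iff]
  refine ⟨by simp [hl], by simpa using hnil, ?_, ?_⟩
  · simp only [mem_cons, forall_eq_or_imp] at hchain ⊢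
    exact ⟨isChain_cons_cons.2 ⟨hab, hchain.1⟩, hchain.2⟩
  · rw [isChain_cons] at hbd ⊢
    refine ⟨fun y hy => ?_, hbd.2⟩
    obtain ⟨_, hy', hr⟩ := hbd.1 y hy
    exact ⟨cons_ne_nil _ _, hy', by rwa [getLast_cons (cons_ne_nil _ _)]⟩

theorem filter_splitBy_beq [BEq α] [LawfulBEq α] (P : α → Bool) (l : List α) :
    (l.splitBy (· == ·)).filter (·.any P) =
      (l.splitBy fun a b => a == b && P a).filter (·.any P) := by
  induction l with
  | nil => rfl
  | cons a l ih =>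
    rcases l with _ | ⟨b, l⟩
    · rfl
    obtain ⟨g, gs, hg⟩ := exists_cons_of_ne_nil (splitBy_ne_nil.2 (cons_ne_nil b l) :
      (b :: l).splitBy (· == ·) ≠ [])
    obtain ⟨h, hs, hh⟩ := exists_cons_of_ne_nil (splitBy_ne_nil.2 (cons_ne_nil b l) :
      (b :: l).splitBy (fun a b => a == b && P a) ≠ [])
    have hchain := isChain_of_mem_splitBy (hg ▸ mem_cons_self : g ∈ (b :: l).splitBy (· == ·))
    obtain ⟨g, rfl⟩ := exists_eq_cons_of_splitBy_cons_eq hg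
    obtain ⟨h, rfl⟩ := exists_eq_cons_of_splitBy_cons_eq hh
    rw [hg, hh] at ih
    by_cases hab : a = b
    · subst hab
      rw [splitBy_cons_cons_of_rel (by simp) hg]
      by_cases hPa : P a
      · rw [splitBy_cons_cons_of_rel (by simp [hPa]) hh]
        simp_all
      · -- the first `==`-block of `a :: l` is constant, hence discarded
        have hg : (a :: g).any P = false := by
          simp only [beq_iff_eq] at hchain
          rw [(isChain_eq_iff_eq_replicate.1 hchain) a rfl]
          simp [hPa]
        rw [splitBy_cons_of_not_rel (by simp [hPa])]
        simp_all
    · rw [splitBy_cons_of_not_rel (l := b :: l) (by simp [hab]),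
        splitBy_cons_of_not_rel (l := b :: l) (by simp [hab]), hg, hh]
      simp only [filter_cons, ih]

end List

open List

section RunLengths

variable {α β : Type*} [BEq α] [BEq β]

def runLengths (P : α → Bool) (l : List α) : List ℕ :=
  ((l.splitBy fun a b => a == b && P a).filter (·.any P)).map length

theorem runLengths_cons_of_eq_false {P : α → Bool} {a : α} (hP : P a = false) (l : List α) :
    runLengths P (a :: l) = runLengths P l := by
  rw [runLengths, splitBy_cons_of_not_rel (by simp [hP])]
  simp [hP, runLengths]

theorem runLengths_cons_of_ne [LawfulBEq α] {P : α → Bool} {a : α} {l : List α} (hP : P a)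
    (hl : ∀ b ∈ l.head?, b ≠ a) : runLengths P (a :: l) = 1 :: runLengths P l := by
  have : ∀ b ∈ l.head?, (a == b && P a) = false := fun b hb => by
    simp [Ne.symm (hl b hb)]
  rw [runLengths, splitBy_cons_of_not_rel this]
  simp [hP, runLengths]

theorem runLengths_cons_cons_self [LawfulBEq α] {P : α → Bool} {a : α} (hP : P a) (l : List α) :
    runLengths P (a :: a :: l) = (runLengths P (a :: l)).modifyHead (· + 1) := by
  obtain ⟨g, gs, hg⟩ := exists_cons_of_ne_nil (splitBy_ne_nil.2 (cons_ne_nil a l) :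
    (a :: l).splitBy (fun a b => a == b && P a) ≠ [])
  obtain ⟨g, rfl⟩ := exists_eq_cons_of_splitBy_cons_eq hg
  rw [runLengths, runLengths, splitBy_cons_cons_of_rel (by simp [hP]) hg, hg]
  simp [hP]

theorem runLengths_map [LawfulBEq α] [LawfulBEq β] {P : α → Bool} {Q : β → Bool} {f : α → β}
    (hf : ∀ a b, (f a == f b && Q (f a)) = (a == b && P a)) (l : List α) :
    runLengths Q (l.map f) = runLengths P l := by
  have hQ : ∀ a, Q (f a) = P a := fun a => by simpa using hf a a
  have hr : (fun a b => f a == f b && Q (f a)) = fun a b => a == b && P a := funext₂ hf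
  rw [runLengths, splitBy_map, hr]
  simp only [runLengths, filter_map, map_map, Function.comp_def, length_map, any_map, hQ]

theorem runLengths_reverse [LawfulBEq α] (P : α → Bool) (l : List α) :
    runLengths P l.reverse = (runLengths P l).reverse := by
  have hsymm : ∀ a b, (a == b && P a) = (b == a && P b) := fun a b => by
    by_cases h : a = b
    · subst h; rfl
    · simp [beq_false_of_ne h, beq_false_of_ne (Ne.symm h)]
  rw [runLengths, splitBy_reverse hsymm l]
  simp only [runLengths, filter_reverse, map_reverse, filter_map, map_map, Function.comp_def,
    length_reverse, any_reverse]

theorem trueRuns_eq_runLengths (p : List Bool) : trueRuns p = ↑(runLengths id p) := by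
  rw [trueRuns, runLengths, filter_splitBy_beq]

theorem rstripType_const (m : ℕ) (l : List ℕ) :
    rstripType (fun _ => m) l = ↑(runLengths (· < m) l) := by
  set box : ℕ → Option ℕ := fun x => if x < m then some x else none
  have hl : (l.zipIdx.map Prod.swap).map (fun p => if p.2 < m then some p.2 else none) =
      l.map box := by
    rw [map_map]
    conv_rhs => rw [← zipIdx_map_fst 0 l, map_map]
    rfl
  have hbox : ∀ a b, (box a == box b && (box a).isSome) = (a == b && decide (a < m)) := by
    intro a b
    by_cases ha : a < m <;> by_cases hb : b < m <;> simp [box, ha, hb]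
    omega
  rw [rstripType, hl]
  exact congrArg _ (runLengths_map hbox l)

theorem runLengths_reverse_map_tsub (m : ℕ) (l : List ℕ) :
    runLengths (0 < ·) (l.map (m - ·)).reverse = (runLengths (· < m) l).reverse := by
  have h : ∀ a b, ((m - a) == (m - b) && decide (0 < m - a)) = (a == b && decide (a < m)) := by
    intro a b
    by_cases ha : a < m
    · by_cases hab : a = b
      · simp [hab]
      · have : m - a ≠ m - b := by omega
        simp [beq_false_of_ne hab, beq_false_of_ne this]
    · simp [Nat.sub_eq_zero_of_le (not_lt.1 ha), ha]
  rw [runLengths_reverse, runLengths_map h]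

end RunLengths

/-- The path from height `h` up to height `m` whose east steps lie at the heights `s`. -/
def pathOfHeights (m : ℕ) : ℕ → List ℕ → List Bool
  | h, [] => replicate (m - h) false
  | h, a :: s => replicate (a - h) false ++ true :: pathOfHeights m a s

def eastHeights : ℕ → List Bool → List ℕ
  | _, [] => []
  | h, true :: p => h :: eastHeights h p
  | h, false :: p => eastHeights (h + 1) p

theorem length_eastHeights (h : ℕ) (p : List Bool) :
    (eastHeights h p).length = p.count true := by
  induction p generalizing h with
  | nil => rfl
  | cons b p ih => cases b <;> simp [eastHeights, ih]

theorem le_of_mem_eastHeights {h x : ℕ} {p : List Bool} (hx : x ∈ eastHeights h p) : h ≤ x := by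
  induction p generalizing h with
  | nil => simp [eastHeights] at hx
  | cons b p ih =>
    cases b with
    | true =>
      rcases mem_cons.1 hx with rfl | hx
      exacts [le_rfl, ih hx]
    | false => exact (Nat.le_succ h).trans (ih hx)

theorem le_add_count_of_mem_eastHeights {h x : ℕ} {p : List Bool} (hx : x ∈ eastHeights h p) :
    x ≤ h + p.count false := by
  induction p generalizing h with
  | nil => simp [eastHeights] at hx
  | cons b p ih =>
    cases b with
    | true =>
      rcases mem_cons.1 hx with rfl | hx
      exacts [by simp, by simpa using ih hx]
    | false => simpa [count_cons, add_assoc, add_comm 1] using ih hx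

theorem pairwise_eastHeights (h : ℕ) (p : List Bool) : (eastHeights h p).Pairwise (· ≤ ·) := by
  induction p generalizing h with
  | nil => exact Pairwise.nil
  | cons b p ih =>
    cases b with
    | true => exact pairwise_cons.2 ⟨fun _ => le_of_mem_eastHeights, ih h⟩
    | false => exact ih (h + 1)

theorem eastHeights_replicate_false_append (h c : ℕ) (p : List Bool) :
    eastHeights h (replicate c false ++ p) = eastHeights (h + c) p := by
  induction c generalizing h with
  | zero => rfl
  | succ c ih => rw [replicate_succ, cons_append, eastHeights, ih, add_right_comm, add_assoc]

theorem count_true_pathOfHeights (m h : ℕ) (s : List ℕ) :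
    (pathOfHeights m h s).count true = s.length := by
  induction s generalizing h with
  | nil => simp [pathOfHeights, count_replicate]
  | cons a s ih => simp [pathOfHeights, count_replicate, ih]

theorem count_false_pathOfHeights {m h : ℕ} {s : List ℕ} (hs : (h :: s).IsChain (· ≤ ·))
    (hm : ∀ x ∈ h :: s, x ≤ m) : (pathOfHeights m h s).count false = m - h := by
  induction s generalizing h with
  | nil => simp [pathOfHeights]
  | cons a s ih =>
    have hha : h ≤ a := hs.rel
    have ham : a ≤ m := hm a (by simp)
    rw [pathOfHeights, count_append, count_replicate_self, count_cons,
      ih hs.tail (fun x hx => hm x (mem_cons_of_mem h hx))]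
    simp only [Bool.true_beq, Bool.false_eq_true, if_false]
    omega

theorem eastHeights_pathOfHeights {m h : ℕ} {s : List ℕ} (hs : (h :: s).IsChain (· ≤ ·)) :
    eastHeights h (pathOfHeights m h s) = s := by
  induction s generalizing h with
  | nil => rw [pathOfHeights, ← append_nil (replicate _ _), eastHeights_replicate_false_append,
      eastHeights]
  | cons a s ih =>
    rw [pathOfHeights, eastHeights_replicate_false_append, Nat.add_sub_cancel' hs.rel,
      eastHeights, ih hs.tail]

theorem pathOfHeights_eq_false_cons {m h : ℕ} {s : List ℕ} (hm : h < m) (hs : ∀ x ∈ s, h < x) :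
    pathOfHeights m h s = false :: pathOfHeights m (h + 1) s := by
  cases s with
  | nil => rw [pathOfHeights, pathOfHeights, show m - h = m - (h + 1) + 1 by omega, replicate_succ]
  | cons a s =>
    have := hs a mem_cons_self
    rw [pathOfHeights, pathOfHeights, show a - h = a - (h + 1) + 1 by omega, replicate_succ,
      cons_append]

theorem pathOfHeights_eastHeights (h : ℕ) (p : List Bool) :
    pathOfHeights (h + p.count false) h (eastHeights h p) = p := by
  induction p generalizing h with
  | nil => simp [pathOfHeights, eastHeights]
  | cons b p ih =>
    cases b with
    | true => simpa [pathOfHeights, eastHeights] using ih h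
    | false =>
      rw [eastHeights, pathOfHeights_eq_false_cons (by simp) fun _ => le_of_mem_eastHeights,
        count_cons_self, ← add_assoc, add_right_comm]
      exact congrArg _ (ih (h + 1))

theorem runLengths_id_eq_eastHeights {h : ℕ} (hh : 0 < h) (p : List Bool) :
    runLengths id p = runLengths (0 < ·) (eastHeights h p) := by
  induction p generalizing h with
  | nil => rfl
  | cons b p ih =>
    cases b with
    | false => rw [runLengths_cons_of_eq_false rfl, ih (Nat.succ_pos h), eastHeights]
    | true =>
      rcases p with _ | ⟨_ | _, p⟩
      · rw [runLengths_cons_of_ne rfl (by simp), eastHeights,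
          runLengths_cons_of_ne (by simpa using hh) (by simp [eastHeights])]
        rfl
      · rw [runLengths_cons_of_ne rfl (by simp), ih hh, eastHeights, eastHeights,
          runLengths_cons_of_ne (by simpa using hh) fun x hx =>
            (lt_of_lt_of_le (Nat.lt_succ_self h) (le_of_mem_eastHeights (mem_of_mem_head? hx))).ne']
      · rw [runLengths_cons_cons_self rfl, ih hh, eastHeights, eastHeights, eastHeights,
          runLengths_cons_cons_self (by simpa using hh)]

theorem runLengths_dropWhile_eq_eastHeights (p : List Bool) :
    runLengths id (p.dropWhile (· == true)) = runLengths (0 < ·) (eastHeights 0 p) := by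
  induction p with
  | nil => rfl
  | cons b p ih =>
    cases b with
    | true => rw [dropWhile_cons_of_pos rfl, ih, eastHeights, runLengths_cons_of_eq_false (by simp)]
    | false => rw [dropWhile_cons_of_neg (by simp), runLengths_cons_of_eq_false rfl,
        runLengths_id_eq_eastHeights Nat.one_pos, eastHeights]

abbrev SortedHeights (n m : ℕ) :=
  {l : List ℕ // l.length = n ∧ l.Pairwise (· ≤ ·) ∧ ∀ a ∈ l, a ≤ m}

abbrev LatticePath (n m : ℕ) := {p : List Bool // p.count true = n ∧ p.count false = m}

namespace SortedHeights

theorem isChain_zero_cons {n m : ℕ} (s : SortedHeights n m) : (0 :: s.1).IsChain (· ≤ ·) :=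
  isChain_cons.2 ⟨fun _ _ => Nat.zero_le _, isChain_iff_pairwise.2 s.2.2.1⟩

def pathEquiv (n m : ℕ) : SortedHeights n m ≃ LatticePath n m where
  toFun s := ⟨pathOfHeights m 0 s.1, by rw [count_true_pathOfHeights, s.2.1],
    by rw [count_false_pathOfHeights s.isChain_zero_cons
      (forall_mem_cons.2 ⟨Nat.zero_le m, s.2.2.2⟩), Nat.sub_zero]⟩
  invFun p := ⟨eastHeights 0 p.1, by rw [length_eastHeights, p.2.1], pairwise_eastHeights 0 p.1,
    fun _ ha => by simpa [p.2.2] using le_add_count_of_mem_eastHeights ha⟩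
  left_inv s := Subtype.ext (eastHeights_pathOfHeights s.isChain_zero_cons)
  right_inv p := Subtype.ext (by simpa [p.2.2] using pathOfHeights_eastHeights 0 p.1)

theorem trueRuns_pathEquiv {n m : ℕ} (s : SortedHeights n m) :
    trueRuns ((pathEquiv n m s).1.dropWhile (· == true)) = ↑(runLengths (0 < ·) s.1) := by
  rw [trueRuns_eq_runLengths, runLengths_dropWhile_eq_eastHeights]
  exact congrArg _ (congrArg _ (eastHeights_pathOfHeights s.isChain_zero_cons))

def reflect (n m : ℕ) : Equiv.Perm (SortedHeights n m) :=
  Function.Involutive.toPerm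
    (fun l => ⟨(l.1.map (m - ·)).reverse, by simp [l.2.1],
      pairwise_reverse.2 (pairwise_map.2 (l.2.2.1.imp fun h => Nat.sub_le_sub_left h m)),
      by simp⟩)
    fun l => Subtype.ext <| by
      simp only [map_reverse, reverse_reverse, map_map]
      conv_rhs => rw [← map_id l.1]
      exact map_congr_left fun a ha => Nat.sub_sub_self (l.2.2.2 a ha)

theorem runLengths_reflect {n m : ℕ} (l : SortedHeights n m) :
    runLengths (0 < ·) (reflect n m l).1 = (runLengths (· < m) l.1).reverse :=
  runLengths_reverse_map_tsub m l.1

def equivSym (n m : ℕ) : SortedHeights n m ≃ Sym (Fin (m + 1)) n where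
  toFun l := ⟨(l.1.pmap Fin.mk fun a ha => Nat.lt_succ_of_le (l.2.2.2 a ha) : List _),
    by simp [l.2.1]⟩
  invFun s := ⟨(s.1.sort (· ≤ ·)).map Fin.val, by simp,
    (Multiset.pairwise_sort s.1 (· ≤ ·)).map _ fun _ _ => id, by simp [Fin.is_le]⟩
  left_inv l := Subtype.ext <| by
    dsimp only
    rw [Multiset.coe_sort, mergeSort_eq_self, map_pmap]
    · exact pmap_eq_self.2 fun _ _ => rfl
    · exact (pairwise_pmap _).2 (l.2.2.1.imp fun h _ _ => Fin.mk_le_mk.2 h)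
  right_inv s := Sym.ext <| by
    simp only [pmap_map, Fin.eta, pmap_eq_map, map_id', Multiset.sort_eq]
    rfl

theorem card_eq_choose (n m : ℕ) : Nat.card (SortedHeights n m) = (m + n).choose n := by
  rw [Nat.card_congr (equivSym n m), Nat.card_eq_fintype_card, Sym.card_sym_eq_choose,
    Fintype.card_fin, Nat.add_right_comm, Nat.add_sub_cancel]

end SortedHeights

theorem stmt_17_general (k n : ℕ) :
    ∃ e : {l : List ℕ // l.length = n ∧ l.Pairwise (· ≤ ·) ∧ ∀ a ∈ l, a ≤ k * n} ≃
          {p : List Bool // p.count true = n ∧ p.count false = k * n},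
      (∀ x, rstripType (fun _ => k * n) x.1 =
          trueRuns ((e x).1.dropWhile (· == true))) ∧
      Nat.card {l : List ℕ // l.length = n ∧ l.Pairwise (· ≤ ·) ∧ ∀ a ∈ l, a ≤ k * n} =
        Nat.choose ((k + 1) * n) n := by
  refine ⟨(SortedHeights.reflect n (k * n)).trans (SortedHeights.pathEquiv n (k * n)),
    fun x => ?_, ?_⟩
  · rw [Equiv.trans_apply, SortedHeights.trueRuns_pathEquiv, SortedHeights.runLengths_reflect,
      Multiset.coe_reverse, rstripType_const]
  · rw [SortedHeights.card_eq_choose, add_one_mul]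

/-- There is a type-preserving bijection between r-strips in the rectangular shape
`(n^{kn})` (encoded by the weakly increasing list of heights, each `≤ kn`, of the
horizontal steps of the corresponding lattice path) and lattice paths from `(0,0)` to
`(n, kn)` with unit east (`true`) and north (`false`) steps, where the type of a path is
the multiset of ascent lengths excluding the ascent on `y = 0`; in particular the number
of such r-strips is `C((k+1)n, n)`. -/
theorem stmt_17 (k n : ℕ) (hk : 0 < k) :
    ∃ e : {l : List ℕ // l.length = n ∧ l.Pairwise (· ≤ ·) ∧ ∀ a ∈ l, a ≤ k * n} ≃
          {p : List Bool // p.count true = n ∧ p.count false = k * n},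
      (∀ x, rstripType (fun _ => k * n) x.1 =
          trueRuns ((e x).1.dropWhile (· == true))) ∧
      Nat.card {l : List ℕ // l.length = n ∧ l.Pairwise (· ≤ ·) ∧ ∀ a ∈ l, a ≤ k * n} =
        Nat.choose ((k + 1) * n) n :=
  stmt_17_general k n
end
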